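/- arXiv:1602.06532 — 3 statements merged into one kernel-verified Lean document; each statement's English description precedes it below -/
import Mathlib

section
/- (Laplace's method) Let a < b be real numbers and h : ℝ → ℝ be a C² function on the open interval (a,b). Suppose c ∈ (a,b) satisfies h'(c) = 0 and h''(c) < 0, and that c is the unique maximum of h in the strong sense that for every δ > 0 the supremum of h over {t ∈ (a,b) : |t − c| ≥ δ} is strictly less than h(c). Then ∫_a^b e^{λ h(t)} dt is asymptotic to e^{λ h(c)} · (−2π/(λ h''(c)))^{1/2} as λ → ∞; that is, the ratio of the integral to e^{λ h(c)} √(−2π/(λ h''(c))) tends to 1 as λ → +∞. -/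
/-!
By Taylor's theorem, for `Q < -h''(c) < P` we have
`-(P/2)(t - c)² ≤ h t - h c ≤ -(Q/2)(t - c)²` on a small ball around `c`. On that ball the
integrand `e^{λ(h t - h c)}` is therefore squeezed between two Gaussians, whose integrals are
asymptotic to `√(2π/(λP))` and at most `√(2π/(λQ))`; off the ball `h ≤ h c - m` for some `m > 0`,
so that part contributes `O(e^{-λm}) = o(λ^{-1/2})`. Letting `P` and `Q` tend to `-h''(c)` gives
the limit.
-/

open Filter Real Set MeasureTheory Topology

theorem taylor_mean_remainder_lagrange_deriv_deriv {h : ℝ → ℝ} {c t : ℝ} (hne : c ≠ t)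
    (hh : ContDiffOn ℝ 2 h (uIcc c t)) (hc : DifferentiableAt ℝ h c) :
    ∃ η ∈ uIoo c t, h t = h c + deriv h c * (t - c) + deriv (deriv h) η * (t - c) ^ 2 / 2 := by
  obtain ⟨η, hη, heq⟩ := taylor_mean_remainder_lagrange_iteratedDeriv (n := 1) hne hh
  refine ⟨η, hη, ?_⟩
  rw [taylorWithinEval_succ, taylor_within_zero_eval, iteratedDerivWithin_one,
    hc.derivWithin (uniqueDiffOn_uIcc hne c left_mem_uIcc), iteratedDeriv_succ,
    iteratedDeriv_one] at heq
  norm_num at heq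
  linarith

theorem eventually_exists_sub_eq_mul_sq {h : ℝ → ℝ} {c : ℝ} (hh : ContDiffAt ℝ 2 h c)
    (hc' : deriv h c = 0) {V : Set ℝ} (hV : V ∈ 𝓝 (deriv (deriv h) c)) :
    ∀ᶠ t in 𝓝 c, ∃ η ∈ V, h t - h c = η / 2 * (t - c) ^ 2 := by
  obtain ⟨U, hU, hhU⟩ := hh.contDiffOn le_rfl (by simp)
  obtain ⟨r, hr, hrU⟩ := Metric.mem_nhds_iff.1 hU
  have hball : ContDiffOn ℝ 2 h (Metric.ball c r) := hhU.mono hrU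
  have hcont : ContinuousAt (deriv (deriv h)) c :=
    ((hball.deriv_of_isOpen Metric.isOpen_ball (by norm_num : (1 : WithTop ℕ∞) + 1 ≤ 2)
      ).continuousOn_deriv_of_isOpen Metric.isOpen_ball le_rfl).continuousAt
      (Metric.ball_mem_nhds c hr)
  obtain ⟨ρ, hρ, hρr⟩ := Metric.eventually_nhds_iff_ball.1
    (Eventually.and (Metric.ball_mem_nhds c hr) (hcont.eventually hV) :
      ∀ᶠ x in 𝓝 c, x ∈ Metric.ball c r ∧ deriv (deriv h) x ∈ V)
  filter_upwards [Metric.ball_mem_nhds c hρ] with t ht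
  rcases eq_or_ne c t with rfl | hne
  · exact ⟨_, mem_of_mem_nhds hV, by simp⟩
  have hsub : uIcc c t ⊆ Metric.ball c ρ := by
    rw [← segment_eq_uIcc]
    exact (convex_ball c ρ).segment_subset (Metric.mem_ball_self hρ) ht
  obtain ⟨η, hη, heq⟩ := taylor_mean_remainder_lagrange_deriv_deriv hne
    (hball.mono fun x hx => (hρr x (hsub hx)).1)
    ((hball.differentiableOn (by norm_num)).differentiableAt (Metric.ball_mem_nhds c hr))
  refine ⟨_, (hρr η (hsub (uIoo_subset_uIcc_self hη))).2, ?_⟩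
  rw [heq, hc']
  ring

theorem eventually_mul_sq_le_sub {h : ℝ → ℝ} {c A : ℝ} (hh : ContDiffAt ℝ 2 h c)
    (hc' : deriv h c = 0) (hA : A < deriv (deriv h) c) :
    ∀ᶠ t in 𝓝 c, A / 2 * (t - c) ^ 2 ≤ h t - h c := by
  filter_upwards [eventually_exists_sub_eq_mul_sq hh hc' (Ioi_mem_nhds hA)] with t ⟨η, hη, ht⟩
  rw [ht]
  gcongr
  exact hη.le

theorem eventually_sub_le_mul_sq {h : ℝ → ℝ} {c B : ℝ} (hh : ContDiffAt ℝ 2 h c)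
    (hc' : deriv h c = 0) (hB : deriv (deriv h) c < B) :
    ∀ᶠ t in 𝓝 c, h t - h c ≤ B / 2 * (t - c) ^ 2 := by
  filter_upwards [eventually_exists_sub_eq_mul_sq hh hc' (Iio_mem_nhds hB)] with t ⟨η, hη, ht⟩
  rw [ht]
  gcongr
  exact hη.le

theorem tendsto_sqrt_mul_intervalIntegral_gaussian {δ : ℝ} (hδ : 0 < δ) :
    Tendsto (fun b : ℝ => √(b / π) * ∫ x in -δ..δ, exp (-b * x ^ 2)) atTop (𝓝 1) := by
  have hend : Tendsto (fun b : ℝ => δ * √b) atTop atTop := tendsto_sqrt_atTop.const_mul_atTop hδ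
  have hlim := (intervalIntegral_tendsto_integral (integrable_exp_neg_mul_sq one_pos)
    (tendsto_neg_atBot_iff.2 hend) hend).const_mul (√π)⁻¹
  rw [integral_gaussian, div_one, inv_mul_cancel₀ (sqrt_pos.2 pi_pos).ne'] at hlim
  refine hlim.congr' ?_
  filter_upwards [eventually_gt_atTop 0] with b hb
  have hm : 0 < √b := sqrt_pos.2 hb
  have hscale : (fun x : ℝ => exp (-b * x ^ 2)) = fun x => exp (-1 * (√b * x) ^ 2) := by
    ext x
    rw [mul_pow, sq_sqrt hb.le]
    ring_nf
  rw [hscale, intervalIntegral.integral_comp_mul_left (fun u => exp (-1 * u ^ 2)) hm.ne',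
    smul_eq_mul, sqrt_div hb.le, mul_neg, mul_comm √b δ]
  field_simp

theorem integrableOn_exp_mul_of_nonpos {μ : Measure ℝ} {f : ℝ → ℝ} {s : Set ℝ} {lam : ℝ}
    (hs : MeasurableSet s) (hμs : μ s ≠ ⊤) (hf : ContinuousOn f s) (hf0 : ∀ t ∈ s, f t ≤ 0)
    (hlam : 0 ≤ lam) : IntegrableOn (fun t => exp (lam * f t)) s μ := by
  refine ⟨(continuous_exp.comp_continuousOn (continuousOn_const.mul hf)).aestronglyMeasurable hs,
    HasFiniteIntegral.restrict_of_bounded 1 hμs.lt_top ?_⟩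
  filter_upwards [ae_restrict_mem hs] with t ht
  rw [norm_of_nonneg (exp_pos _).le, exp_le_one_iff]
  exact mul_nonpos_of_nonneg_of_nonpos hlam (hf0 t ht)

theorem intervalIntegral_gaussian_le_setIntegral_exp {f : ℝ → ℝ} {s : Set ℝ} {c δ p lam : ℝ}
    (hδ : 0 ≤ δ) (hlam : 0 ≤ lam) (hball : Metric.ball c δ ⊆ s)
    (hf : ∀ t ∈ Metric.ball c δ, -p * (t - c) ^ 2 ≤ f t)
    (hint : IntegrableOn (fun t => exp (lam * f t)) s) :
    ∫ x in -δ..δ, exp (-(lam * p) * x ^ 2) ≤ ∫ t in s, exp (lam * f t) := by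
  calc ∫ x in -δ..δ, exp (-(lam * p) * x ^ 2)
      = ∫ t in Metric.ball c δ, exp (-(lam * p) * (t - c) ^ 2) := by
        rw [ball_eq_Ioo, ← integral_Ioc_eq_integral_Ioo,
          ← intervalIntegral.integral_of_le (by linarith),
          intervalIntegral.integral_comp_sub_right (fun x => exp (-(lam * p) * x ^ 2))]
        ring_nf
    _ ≤ ∫ t in Metric.ball c δ, exp (lam * f t) := by
        refine setIntegral_mono_on ?_ (hint.mono_set hball) measurableSet_ball fun t ht => ?_
        · exact ((Continuous.locallyIntegrable (by fun_prop)).integrableOn_isCompact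
            (isCompact_closedBall c δ)).mono_set Metric.ball_subset_closedBall
        · rw [exp_le_exp]
          nlinarith [mul_le_mul_of_nonneg_left (hf t ht) hlam]
    _ ≤ ∫ t in s, exp (lam * f t) :=
        setIntegral_mono_set hint (Eventually.of_forall fun _ => (exp_pos _).le)
          hball.eventuallyLE

theorem setIntegral_exp_le {f : ℝ → ℝ} {s : Set ℝ} {c δ q m lam : ℝ} (hlam : 0 < lam) (hq : 0 < q)
    (hs : MeasurableSet s) (hvol : volume s ≠ ⊤) (hint : IntegrableOn (fun t => exp (lam * f t)) s)
    (hnear : ∀ t ∈ s ∩ Metric.ball c δ, f t ≤ -q * (t - c) ^ 2)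
    (hfar : ∀ t ∈ s \ Metric.ball c δ, f t ≤ -m) :
    ∫ t in s, exp (lam * f t) ≤ √(π / (lam * q)) + volume.real s * exp (-(lam * m)) := by
  have hgauss : Integrable fun t => exp (-(lam * q) * (t - c) ^ 2) :=
    (integrable_exp_neg_mul_sq (mul_pos hlam hq)).comp_sub_right c
  rw [← integral_inter_add_sdiff measurableSet_ball hint]
  gcongr
  · calc ∫ t in s ∩ Metric.ball c δ, exp (lam * f t)
        ≤ ∫ t in s ∩ Metric.ball c δ, exp (-(lam * q) * (t - c) ^ 2) := by
          refine setIntegral_mono_on (hint.mono_set inter_subset_left) hgauss.integrableOn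
            (hs.inter measurableSet_ball) fun t ht => ?_
          rw [exp_le_exp]
          nlinarith [mul_le_mul_of_nonneg_left (hnear t ht) hlam.le]
      _ ≤ ∫ t, exp (-(lam * q) * (t - c) ^ 2) :=
          setIntegral_le_integral hgauss (Eventually.of_forall fun _ => (exp_pos _).le)
      _ = √(π / (lam * q)) := by
          rw [integral_sub_right_eq_self (fun x => exp (-(lam * q) * x ^ 2)), integral_gaussian]
  · calc ∫ t in s \ Metric.ball c δ, exp (lam * f t)
        ≤ exp (-(lam * m)) * volume.real (s \ Metric.ball c δ) := by
          refine (le_norm_self _).trans (norm_setIntegral_le_of_norm_le_const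
            ((measure_mono sdiff_subset).trans_lt hvol.lt_top) fun t ht => ?_)
          rw [norm_of_nonneg (exp_pos _).le, exp_le_exp]
          nlinarith [mul_le_mul_of_nonneg_left (hfar t ht) hlam.le]
      _ ≤ volume.real s * exp (-(lam * m)) := by
          rw [mul_comm]
          gcongr
          exact sdiff_subset

theorem tendsto_of_forall_tendsto_bounds {α ι κ β : Type*} [TopologicalSpace β] [LinearOrder β]
    [OrderTopology β] {l : Filter α} {F : Filter ι} {G : Filter κ} [F.NeBot] [G.NeBot]
    {f : α → β} {x : β} {L : ι → β} {U : κ → β}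
    (hL : Tendsto L F (𝓝 x)) (hU : Tendsto U G (𝓝 x))
    (hlow : ∀ᶠ i in F, ∃ g, Tendsto g l (𝓝 (L i)) ∧ g ≤ᶠ[l] f)
    (hup : ∀ᶠ j in G, ∃ g, Tendsto g l (𝓝 (U j)) ∧ f ≤ᶠ[l] g) :
    Tendsto f l (𝓝 x) := by
  refine tendsto_order.2 ⟨fun y hy => ?_, fun y hy => ?_⟩
  · obtain ⟨i, hyi, g, hg, hgf⟩ := ((hL.eventually (lt_mem_nhds hy)).and hlow).exists
    filter_upwards [hg.eventually (lt_mem_nhds hyi), hgf] with z h1 h2 using h1.trans_le h2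
  · obtain ⟨j, hyj, g, hg, hfg⟩ := ((hU.eventually (gt_mem_nhds hy)).and hup).exists
    filter_upwards [hg.eventually (gt_mem_nhds hyj), hfg] with z h1 h2 using h2.trans_lt h1

/-- `√(2π/(λK))` is the integral of the Gaussian `exp (-λK t²/2)`. -/
noncomputable def laplaceRatio (s : Set ℝ) (f : ℝ → ℝ) (K lam : ℝ) : ℝ :=
  √(lam * K / (2 * π)) * ∫ t in s, exp (lam * f t)

theorem exists_tendsto_le_laplaceRatio {s : Set ℝ} {f : ℝ → ℝ} {c K P : ℝ} (hK : 0 ≤ K)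
    (hP : 0 < P) (hs : s ∈ 𝓝 c) (hint : ∀ lam ≥ 0, IntegrableOn (fun t => exp (lam * f t)) s)
    (hf : ∀ᶠ t in 𝓝 c, -P / 2 * (t - c) ^ 2 ≤ f t) :
    ∃ g, Tendsto g atTop (𝓝 √(K / P)) ∧ g ≤ᶠ[atTop] laplaceRatio s f K := by
  obtain ⟨δ, hδ, hball⟩ := Metric.eventually_nhds_iff_ball.1 (hf.and hs)
  have hgauss := (tendsto_sqrt_mul_intervalIntegral_gaussian hδ).comp
    (tendsto_id.atTop_mul_const (half_pos hP))
  refine ⟨fun lam => √(K / P) * (√(lam * (P / 2) / π) *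
    ∫ x in -δ..δ, exp (-(lam * (P / 2)) * x ^ 2)), by simpa using hgauss.const_mul √(K / P), ?_⟩
  filter_upwards [eventually_ge_atTop 0] with lam hlam
  have hsqrt : √(K / P) * √(lam * (P / 2) / π) = √(lam * K / (2 * π)) := by
    rw [← sqrt_mul (div_nonneg hK hP.le)]
    congr 1
    field_simp
  rw [← mul_assoc, hsqrt, laplaceRatio]
  gcongr
  exact intervalIntegral_gaussian_le_setIntegral_exp hδ.le hlam (fun t ht => (hball t ht).2)
    (fun t ht => by linarith [(hball t ht).1]) (hint lam hlam)

theorem exists_tendsto_laplaceRatio_le {s : Set ℝ} {f : ℝ → ℝ} {c K Q : ℝ} (hK : 0 ≤ K)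
    (hQ : 0 < Q) (hs : MeasurableSet s) (hvol : volume s ≠ ⊤)
    (hint : ∀ lam ≥ 0, IntegrableOn (fun t => exp (lam * f t)) s)
    (hnear : ∀ᶠ t in 𝓝 c, f t ≤ -Q / 2 * (t - c) ^ 2)
    (hfar : ∀ δ > 0, ∃ m > 0, ∀ t ∈ s, δ ≤ |t - c| → f t ≤ -m) :
    ∃ g, Tendsto g atTop (𝓝 √(K / Q)) ∧ laplaceRatio s f K ≤ᶠ[atTop] g := by
  obtain ⟨δ, hδ, hball⟩ := Metric.eventually_nhds_iff_ball.1 hnear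
  obtain ⟨m, hm, hfar⟩ := hfar δ hδ
  have htail : Tendsto (fun lam => √(lam * K / (2 * π)) * (volume.real s * exp (-(lam * m))))
      atTop (𝓝 0) := by
    have := (tendsto_rpow_mul_exp_neg_mul_atTop_nhds_zero (1 / 2) m hm).const_mul
      (√(K / (2 * π)) * volume.real s)
    rw [mul_zero] at this
    refine this.congr' ?_
    filter_upwards [eventually_ge_atTop 0] with lam hlam
    rw [← sqrt_eq_rpow, mul_div_assoc, sqrt_mul hlam, neg_mul, mul_comm m]
    ring
  refine ⟨fun lam => √(K / Q) + √(lam * K / (2 * π)) * (volume.real s * exp (-(lam * m))),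
    by simpa using htail.const_add √(K / Q), ?_⟩
  filter_upwards [eventually_gt_atTop 0] with lam hlam
  have hsqrt : √(lam * K / (2 * π)) * √(π / (lam * (Q / 2))) = √(K / Q) := by
    rw [← sqrt_mul (by positivity)]
    congr 1
    field_simp
  rw [laplaceRatio, ← hsqrt, ← mul_add]
  gcongr
  refine setIntegral_exp_le hlam (half_pos hQ) hs hvol (hint lam hlam.le)
    (fun t ht => by linarith [hball t ht.2]) fun t ht => hfar t ht.1 ?_
  simpa [Metric.mem_ball, dist_eq] using ht.2

theorem integral_exp_div_eq_laplaceRatio {s : Set ℝ} {f : ℝ → ℝ} {A D lam : ℝ} (hlam : 0 < lam) :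
    (∫ t in s, exp (lam * f t)) / (exp (lam * A) * √(-(2 * π) / (lam * D))) =
      laplaceRatio s (fun t => f t - A) (-D) lam := by
  have hexp : (∫ t in s, exp (lam * f t)) = exp (lam * A) * ∫ t in s, exp (lam * (f t - A)) := by
    rw [← integral_const_mul]
    congr 1
    ext t
    rw [← exp_add]
    ring_nf
  have hsqrt : √(-(2 * π) / (lam * D)) = (√(lam * -D / (2 * π)))⁻¹ := by
    rw [← sqrt_inv, inv_div]
    congr 1
    field_simp
  rw [hexp, hsqrt, laplaceRatio, mul_div_mul_left _ _ (exp_pos _).ne', div_inv_eq_mul, mul_comm]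

theorem laplace_method_general (a b : ℝ) (h : ℝ → ℝ)
    (hreg : ContDiffOn ℝ 2 h (Set.Ioo a b))
    (c : ℝ) (hc : c ∈ Set.Ioo a b)
    (hc' : deriv h c = 0) (hc'' : deriv (deriv h) c < 0)
    (hmax : ∀ δ > 0, ∃ M, M < h c ∧ ∀ t ∈ Set.Ioo a b, δ ≤ |t - c| → h t ≤ M) :
    Tendsto (fun lam : ℝ =>
        (∫ t in Set.Ioo a b, Real.exp (lam * h t)) /
          (Real.exp (lam * h c) * Real.sqrt (-(2 * Real.pi) / (lam * deriv (deriv h) c))))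
      atTop (nhds 1) := by
  set K := -deriv (deriv h) c
  have hK : 0 < K := neg_pos.2 hc''
  have hh : ContDiffAt ℝ 2 h c := hreg.contDiffAt (isOpen_Ioo.mem_nhds hc)
  have hfar : ∀ δ > 0, ∃ m > 0, ∀ t ∈ Ioo a b, δ ≤ |t - c| → h t - h c ≤ -m := fun δ hδ => by
    obtain ⟨M, hM, hMb⟩ := hmax δ hδ
    exact ⟨h c - M, by linarith, fun t ht hδt => by linarith [hMb t ht hδt]⟩
  have hle : ∀ t ∈ Ioo a b, h t - h c ≤ 0 := fun t ht => by
    rcases eq_or_ne t c with rfl | htc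
    · simp
    · obtain ⟨m, hm, hmb⟩ := hfar |t - c| (abs_pos.2 (sub_ne_zero.2 htc))
      linarith [hmb t ht le_rfl]
  have hint : ∀ lam ≥ 0, IntegrableOn (fun t => exp (lam * (h t - h c))) (Ioo a b) :=
    fun lam => integrableOn_exp_mul_of_nonpos measurableSet_Ioo (by simp)
      (hreg.continuousOn.sub continuousOn_const) hle
  have hcont : Tendsto (fun P => √(K / P)) (𝓝 K) (𝓝 1) := by
    have : ContinuousAt (fun P => √(K / P)) K :=
      continuous_sqrt.continuousAt.comp (continuousAt_const.div continuousAt_id hK.ne')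
    simpa [div_self hK.ne'] using this.tendsto
  suffices hr : Tendsto (laplaceRatio (Ioo a b) (fun t => h t - h c) K) atTop (𝓝 1) by
    refine hr.congr' ?_
    filter_upwards [eventually_gt_atTop 0] with lam hlam
    exact (integral_exp_div_eq_laplaceRatio hlam).symm
  refine tendsto_of_forall_tendsto_bounds (F := 𝓝[>] K) (G := 𝓝[<] K)
    (hcont.mono_left nhdsWithin_le_nhds) (hcont.mono_left nhdsWithin_le_nhds) ?_ ?_
  · filter_upwards [self_mem_nhdsWithin] with P (hP : K < P)
    exact exists_tendsto_le_laplaceRatio hK.le (hK.trans hP) (isOpen_Ioo.mem_nhds hc) hint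
      (eventually_mul_sq_le_sub hh hc' (by linarith))
  · filter_upwards [Ioo_mem_nhdsLT hK] with Q ⟨hQ, hQK⟩
    exact exists_tendsto_laplaceRatio_le hK.le hQ measurableSet_Ioo (by simp) hint
      (eventually_sub_le_mul_sq hh hc' (by linarith)) hfar

/-- **Laplace's method.** Let `h` be a real-valued `C²` function on a bounded
interval `(a, b)`, with a unique maximum at an interior point `c` (in the strong
sense that for every `δ > 0` the supremum of `h` over the points of `(a, b)` at
distance at least `δ` from `c` is strictly less than `h c`), with `h'(c) = 0`
and `h''(c) < 0`.  Then `∫_a^b e^{λ h(t)} dt ~ e^{λ h(c)} √(-2π/(λ h''(c)))`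
as `λ → ∞`. -/
theorem laplace_method (a b : ℝ) (hab : a < b) (h : ℝ → ℝ)
    (hreg : ContDiffOn ℝ 2 h (Set.Ioo a b))
    (c : ℝ) (hc : c ∈ Set.Ioo a b)
    (hc' : deriv h c = 0) (hc'' : deriv (deriv h) c < 0)
    (hmax : ∀ δ > 0, ∃ M, M < h c ∧ ∀ t ∈ Set.Ioo a b, δ ≤ |t - c| → h t ≤ M) :
    Tendsto (fun lam : ℝ =>
        (∫ t in Set.Ioo a b, Real.exp (lam * h t)) /
          (Real.exp (lam * h c) * Real.sqrt (-(2 * Real.pi) / (lam * deriv (deriv h) c))))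
      atTop (nhds 1) :=
  laplace_method_general a b h hreg c hc hc' hc'' hmax
end

section
/- Let m ≥ 1 and k be integers and let a > 0 be a real number. For each positive integer n, set S_n := Σ_{l ∈ ℤ, (ml+k)² ≤ 4n} exp(a√n · √(1 − (ml+k)²/(4n))) and J_n := ∫_{−1}^{1} exp(a√n · √(1 − t²)) dt. Then (m/(2√n)) · S_n is asymptotic to J_n as n → ∞; that is, the ratio ((m/(2√n)) S_n)/J_n tends to 1. -/
/-!
For `c = a√n`, the integrand `exp (c √(1 - t²))`, extended by zero outside `[-1, 1]`, is unimodal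
with maximum `e^c` at `0`. Comparing each monotone half of a unimodal function with its integral
shows that its Riemann sums with mesh `h` are within `2h · max` of its integral, so
`|(m/(2√n)) S_n - J_n| ≤ (m/√n) e^{a√n}`. Restricting `J_n` to `(-δ, δ)` gives
`J_n ≥ 2δ e^{a√n (1 - δ²)}`, and `δ = n^(-1/4)` makes the relative error `O(n^(-1/4))`.
-/

open Filter Real Set

/-- The finite sum `S_n = Σ_{l ∈ ℤ, (ml+k)² ≤ 4n} exp(a√n √(1 - (ml+k)²/(4n)))`,
written as a `tsum` over `ℤ` of a finitely supported function. -/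
noncomputable def riemannSum (m k : ℤ) (a : ℝ) (n : ℕ) : ℝ :=
  ∑' l : ℤ, if (m * l + k) ^ 2 ≤ 4 * (n : ℤ) then
      Real.exp (a * Real.sqrt n * Real.sqrt (1 - ((m * l + k : ℤ) : ℝ) ^ 2 / (4 * n)))
    else 0

/-- The integral `J_n = ∫_{-1}^{1} exp(a√n √(1 - t²)) dt` (Lebesgue integral
over the interval `(-1, 1)`). -/
noncomputable def riemannIntegral (a : ℝ) (n : ℕ) : ℝ :=
  ∫ t in Set.Ioo (-1 : ℝ) 1, Real.exp (a * Real.sqrt n * Real.sqrt (1 - t ^ 2))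

open MeasureTheory Function

section Unimodal

variable {F : ℝ → ℝ}

theorem AntitoneOn.integral_add_le_sum_range {f : ℝ → ℝ} {x₀ : ℝ} {N : ℕ}
    (hf : AntitoneOn f (Icc x₀ (x₀ + N))) :
    (∫ x in x₀..x₀ + N, f x) + f (x₀ + N) ≤ ∑ i ∈ Finset.range (N + 1), f (x₀ + i) := by
  rw [Finset.sum_range_succ]
  linarith [hf.integral_le_sum]

theorem AntitoneOn.sum_range_le_integral_add {f : ℝ → ℝ} {x₀ : ℝ} {N : ℕ}
    (hf : AntitoneOn f (Icc x₀ (x₀ + N))) :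
    ∑ i ∈ Finset.range (N + 1), f (x₀ + i) ≤ (∫ x in x₀..x₀ + N, f x) + f x₀ := by
  rw [Finset.sum_range_succ']
  simpa using hf.sum_le_integral

theorem le_apply_zero_of_unimodal (hmono : MonotoneOn F (Iic 0)) (hanti : AntitoneOn F (Ici 0))
    (x : ℝ) : F x ≤ F 0 := by
  rcases le_total x 0 with hx | hx
  · exact hmono hx self_mem_Iic hx
  · exact hanti self_mem_Ici hx hx

theorem nonneg_of_unimodal {R : ℝ} (hmono : MonotoneOn F (Iic 0)) (hanti : AntitoneOn F (Ici 0))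
    (hsupp : support F ⊆ Icc (-R) R) (x : ℝ) : 0 ≤ F x := by
  by_contra! hneg
  obtain ⟨hRx, hxR⟩ := hsupp hneg.ne
  have hout : ∀ y ∉ Icc (-R) R, F y = 0 := fun y hy => notMem_support.1 fun h => hy (hsupp h)
  rcases le_total x 0 with hx | hx
  · have := hmono (show -R - 1 ∈ Iic 0 by simp; linarith) hx (by linarith)
    linarith [hout (-R - 1) (by simp)]
  · have := hanti hx (show R + 1 ∈ Ici 0 by simp; linarith) (by linarith)
    linarith [hout (R + 1) (by simp)]

theorem intervalIntegrable_of_unimodal (hmono : MonotoneOn F (Iic 0))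
    (hanti : AntitoneOn F (Ici 0)) (a b : ℝ) : IntervalIntegrable F volume a b := by
  set r := |a| + |b|
  have hr : 0 ≤ r := by positivity
  have hneg : IntervalIntegrable F volume (-r) 0 :=
    (hmono.mono (by simp [uIcc_of_le (neg_nonpos.2 hr), Icc_subset_Iic_self])).intervalIntegrable
  have hpos : IntervalIntegrable F volume 0 r :=
    (hanti.mono (by simp [uIcc_of_le hr, Icc_subset_Ici_self])).intervalIntegrable
  have hmem : ∀ x, |x| ≤ r → x ∈ uIcc (-r) r := fun x hx =>
    mem_uIcc_of_le (abs_le.1 hx).1 (abs_le.1 hx).2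
  exact (hneg.trans hpos).mono_set (uIcc_subset_uIcc (hmem a (by simp [r]))
    (hmem b (by simp [r])))

theorem abs_sum_range_add_sum_range_sub_integral_le_of_unimodal (hmono : MonotoneOn F (Iic 0))
    (hanti : AntitoneOn F (Ici 0)) (hnonneg : ∀ x, 0 ≤ F x) {θ : ℝ} (hθ : θ ∈ Icc 0 1) (N : ℕ) :
    |∑ i ∈ Finset.range (N + 1), F (θ + i) + ∑ i ∈ Finset.range (N + 1), F (θ - 1 - i)
      - ∫ x in (θ - 1 - N)..(θ + N), F x| ≤ 2 * F 0 := by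
  have hint := intervalIntegrable_of_unimodal hmono hanti
  have hle := le_apply_zero_of_unimodal hmono hanti
  have hright : AntitoneOn F (Icc θ (θ + N)) :=
    hanti.mono fun x hx => le_trans hθ.1 hx.1
  have hleft : AntitoneOn (fun x => F (-x)) (Icc (1 - θ) (1 - θ + N)) :=
    fun x hx y hy hxy => hmono (by simp; linarith [hy.1, hθ.2]) (by simp; linarith [hx.1, hθ.2])
      (neg_le_neg hxy)
  have hleft_integral : ∫ x in (1 - θ)..(1 - θ + N), F (-x) = ∫ x in (θ - 1 - N)..(θ - 1), F x := by
    rw [intervalIntegral.integral_comp_neg]; congr 1 <;> ring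
  have hleft_sum : ∑ i ∈ Finset.range (N + 1), F (θ - 1 - i)
      = ∑ i ∈ Finset.range (N + 1), (fun x => F (-x)) (1 - θ + i) :=
    Finset.sum_congr rfl fun i _ => by simp only [neg_add, neg_sub]; ring_nf
  have hmiddle : ∫ x in (θ - 1)..θ, F x ≤ F 0 := by
    simpa using intervalIntegral.integral_mono_on (show θ - 1 ≤ θ by linarith) (hint _ _)
      intervalIntegrable_const fun x _ => hle x
  have hmiddle_nonneg : 0 ≤ ∫ x in (θ - 1)..θ, F x :=
    intervalIntegral.integral_nonneg (by linarith) fun x _ => hnonneg x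
  have hsplit : ∫ x in (θ - 1 - N)..(θ + N), F x = (∫ x in (θ - 1 - N)..(θ - 1), F x)
      + (∫ x in (θ - 1)..θ, F x) + ∫ x in θ..(θ + N), F x := by
    rw [intervalIntegral.integral_add_adjacent_intervals (hint _ _) (hint _ _),
      intervalIntegral.integral_add_adjacent_intervals (hint _ _) (hint _ _)]
  have h1 := hright.integral_add_le_sum_range
  have h2 := hright.sum_range_le_integral_add
  have h3 := hleft.integral_add_le_sum_range
  have h4 := hleft.sum_range_le_integral_add
  rw [hleft_integral] at h3 h4
  rw [hleft_sum, hsplit, abs_le]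
  simp only at h3 h4 ⊢
  constructor <;> linarith [hnonneg (θ + N), hnonneg (-(1 - θ + N)), hle θ, hle (-(1 - θ))]

theorem abs_tsum_sub_integral_le_of_unimodal {R : ℝ} (hmono : MonotoneOn F (Iic 0))
    (hanti : AntitoneOn F (Ici 0)) (hsupp : support F ⊆ Icc (-R) R) (θ : ℝ) :
    |∑' j : ℤ, F (j + θ) - ∫ x, F x| ≤ 2 * F 0 := by
  set φ := Int.fract θ
  have hφ : φ ∈ Icc 0 1 := ⟨Int.fract_nonneg θ, (Int.fract_lt_one θ).le⟩
  have hshift : ∑' j : ℤ, F (j + θ) = ∑' j : ℤ, F (j + φ) := by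
    rw [← (Equiv.addRight ⌊θ⌋).tsum_eq (fun j : ℤ => F (j + φ))]
    simp only [Equiv.coe_addRight, Int.cast_add, add_assoc, φ, Int.floor_add_fract]
  obtain ⟨N, hN⟩ := exists_nat_ge (R + 1)
  have hout : ∀ y, y < -R ∨ R < y → F y = 0 := fun y hy => notMem_support.1 fun h => by
    obtain ⟨hlo, hhi⟩ := hsupp h
    rcases hy with hy | hy <;> linarith
  have hpos : ∀ i ∉ Finset.range (N + 1), F ((i : ℤ) + φ) = 0 := fun i hi => by
    have : (N : ℝ) + 1 ≤ i := by exact_mod_cast Finset.mem_range.not.1 hi |> not_lt.1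
    exact hout _ (Or.inr (by push_cast; linarith [hφ.1]))
  have hneg : ∀ i ∉ Finset.range (N + 1), F (((-((i : ℤ) + 1) : ℤ) : ℝ) + φ) = 0 := fun i hi => by
    have : (N : ℝ) + 1 ≤ i := by exact_mod_cast Finset.mem_range.not.1 hi |> not_lt.1
    exact hout _ (Or.inl (by push_cast; linarith [hφ.2]))
  have hsum : ∑' j : ℤ, F (j + φ) = ∑ i ∈ Finset.range (N + 1), F (φ + i)
      + ∑ i ∈ Finset.range (N + 1), F (φ - 1 - i) := by
    rw [tsum_of_nat_of_neg_add_one (summable_of_ne_finset_zero hpos)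
      (summable_of_ne_finset_zero hneg), tsum_eq_sum hpos, tsum_eq_sum hneg]
    congr 1 <;> refine Finset.sum_congr rfl fun i _ => congrArg F ?_ <;> push_cast <;> ring
  have hintegral : ∫ x, F x = ∫ x in (φ - 1 - N)..(φ + N), F x :=
    (intervalIntegral.integral_eq_integral_of_support_subset
      (hsupp.trans (Icc_subset_Ioc (by linarith [hφ.2]) (by linarith [hφ.1])))).symm
  rw [hshift, hsum, hintegral]
  exact abs_sum_range_add_sum_range_sub_integral_le_of_unimodal hmono hanti
    (nonneg_of_unimodal hmono hanti hsupp) hφ N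

end Unimodal

noncomputable def expCap (c t : ℝ) : ℝ :=
  (Icc (-1) 1).indicator (fun t => exp (c * √(1 - t ^ 2))) t

theorem expCap_neg (c t : ℝ) : expCap c (-t) = expCap c t := by
  simp only [expCap, indicator_apply, mem_Icc, neg_sq, neg_le, neg_neg, and_comm]

theorem expCap_antitoneOn {c : ℝ} (hc : 0 ≤ c) : AntitoneOn (expCap c) (Ici 0) := by
  intro x hx y hy hxy
  by_cases hy1 : y ≤ 1
  · have hx1 : x ∈ Icc (-1 : ℝ) 1 := ⟨by linarith [mem_Ici.1 hx], by linarith⟩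
    have hy1 : y ∈ Icc (-1 : ℝ) 1 := ⟨by linarith [mem_Ici.1 hy], hy1⟩
    simp only [expCap, indicator_of_mem hx1, indicator_of_mem hy1]
    gcongr
  · rw [expCap, indicator_of_notMem (fun h => hy1 h.2)]
    exact indicator_nonneg (fun _ _ => (exp_pos _).le) _

theorem expCap_monotoneOn {c : ℝ} (hc : 0 ≤ c) : MonotoneOn (expCap c) (Iic 0) :=
  fun x hx y hy hxy => by
    rw [← expCap_neg c x, ← expCap_neg c y]
    exact expCap_antitoneOn hc (mem_Ici.2 (neg_nonneg.2 hy)) (mem_Ici.2 (neg_nonneg.2 hx))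
      (neg_le_neg hxy)

theorem expCap_zero (c : ℝ) : expCap c 0 = exp c := by
  simp [expCap]

theorem support_expCap_subset (c : ℝ) : support (expCap c) ⊆ Icc (-1) 1 :=
  support_indicator_subset

theorem integral_expCap (c : ℝ) :
    ∫ x, expCap c x = ∫ t in Ioo (-1) 1, exp (c * √(1 - t ^ 2)) := by
  rw [← integral_Icc_eq_integral_Ioo, ← integral_indicator measurableSet_Icc]
  rfl

theorem two_mul_mul_exp_le_integral {c δ : ℝ} (hc : 0 ≤ c) (hδ0 : 0 < δ) (hδ1 : δ ≤ 1) :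
    2 * δ * exp (c * (1 - δ ^ 2)) ≤ ∫ t in Ioo (-1) 1, exp (c * √(1 - t ^ 2)) := by
  have hint : IntegrableOn (fun t => exp (c * √(1 - t ^ 2))) (Ioo (-1) 1) :=
    (by fun_prop : Continuous fun t : ℝ => exp (c * √(1 - t ^ 2))).integrableOn_Icc.mono_set
      Ioo_subset_Icc_self
  have hsub : Ioo (-δ) δ ⊆ Ioo (-1) 1 := Ioo_subset_Ioo (neg_le_neg hδ1) hδ1
  -- on `(-δ, δ)` we have `√(1 - t²) ≥ 1 - t² ≥ 1 - δ²`
  have hinner : 2 * δ * exp (c * (1 - δ ^ 2)) ≤ ∫ t in Ioo (-δ) δ, exp (c * √(1 - t ^ 2)) := by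
    have := setIntegral_ge_of_const_le_real (c := exp (c * (1 - δ ^ 2))) measurableSet_Ioo
      measure_Ioo_lt_top.ne
      (fun t ht => ?_) (hint.mono_set hsub)
    · rw [Real.volume_real_Ioo_of_le (by linarith)] at this
      linarith
    · have ht2 : t ^ 2 ≤ δ ^ 2 := sq_le_sq' ht.1.le ht.2.le
      have hsqrt : 1 - t ^ 2 ≤ √(1 - t ^ 2) := Real.le_sqrt_self_iff.2 (by nlinarith)
      gcongr
      linarith
  exact hinner.trans (setIntegral_mono_set hint (Eventually.of_forall fun _ => (exp_pos _).le)
    hsub.eventuallyLE)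

theorem riemannSum_eq_tsum_expCap (m k : ℤ) (a : ℝ) {n : ℕ} (hn : 0 < n) :
    riemannSum m k a n = ∑' l : ℤ, expCap (a * √n) ((m * l + k : ℤ) / (2 * √n)) := by
  have hsq : ∀ x : ℝ, (x / (2 * √n)) ^ 2 = x ^ 2 / (4 * n) := fun x => by
    rw [div_pow, mul_pow, sq_sqrt n.cast_nonneg]; norm_num
  have hmem : ∀ z : ℤ, (z : ℝ) / (2 * √n) ∈ Icc (-1) 1 ↔ z ^ 2 ≤ 4 * (n : ℤ) := fun z => by
    rw [mem_Icc, ← abs_le, ← sq_le_one_iff_abs_le_one, hsq, div_le_one (by positivity)]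
    exact_mod_cast Iff.rfl
  refine tsum_congr fun l => ?_
  simp only [expCap, indicator_apply, hmem, hsq]

theorem abs_mul_riemannSum_sub_riemannIntegral_le {m : ℤ} (k : ℤ) {a : ℝ} {n : ℕ} (hm : 0 < m)
    (ha : 0 ≤ a) (hn : 0 < n) :
    |m / (2 * √n) * riemannSum m k a n - riemannIntegral a n| ≤ m / √n * exp (a * √n) := by
  have hsqrt : 0 < √(n : ℝ) := sqrt_pos.2 (by exact_mod_cast hn)
  have hmR : (0 : ℝ) < m := by exact_mod_cast hm
  set h : ℝ := m / (2 * √n)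
  have hh : 0 < h := by positivity
  set c := a * √n
  have hc : 0 ≤ c := by positivity
  -- rescaling by the mesh `h` turns the sum into one with unit step
  set F : ℝ → ℝ := fun u => expCap c (h * u)
  have hmono : MonotoneOn F (Iic 0) := fun x hx y hy hxy =>
    expCap_monotoneOn hc (mul_nonpos_of_nonneg_of_nonpos hh.le hx)
      (mul_nonpos_of_nonneg_of_nonpos hh.le hy) (mul_le_mul_of_nonneg_left hxy hh.le)
  have hanti : AntitoneOn F (Ici 0) := fun x hx y hy hxy =>
    expCap_antitoneOn hc (mul_nonneg hh.le hx) (mul_nonneg hh.le hy)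
      (mul_le_mul_of_nonneg_left hxy hh.le)
  have hsupp : support F ⊆ Icc (-h⁻¹) h⁻¹ := fun x hx => by
    obtain ⟨hlo, hhi⟩ := support_expCap_subset c hx
    have hx' : x = h⁻¹ * (h * x) := by field_simp
    have := inv_pos.2 hh
    constructor <;> rw [hx'] <;> nlinarith
  have hsum : riemannSum m k a n = ∑' l : ℤ, F (l + k / m) := by
    rw [riemannSum_eq_tsum_expCap m k a hn]
    refine tsum_congr fun l => congrArg (expCap c) ?_
    simp only [h]
    field_simp
    push_cast
    ring
  have hintegral : riemannIntegral a n = h * ∫ u, F u := by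
    rw [Measure.integral_comp_mul_left, integral_expCap, abs_of_pos (inv_pos.2 hh), smul_eq_mul,
      ← mul_assoc, mul_inv_cancel₀ hh.ne', one_mul]
    rfl
  calc |h * riemannSum m k a n - riemannIntegral a n|
      = h * |∑' l : ℤ, F (l + k / m) - ∫ u, F u| := by
        rw [hsum, hintegral, ← mul_sub, abs_mul, abs_of_pos hh]
    _ ≤ h * (2 * F 0) := by
        gcongr
        exact abs_tsum_sub_integral_le_of_unimodal hmono hanti hsupp _
    _ = m / √n * exp c := by
        simp only [F, h, mul_zero, expCap_zero]
        field_simp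

theorem mul_exp_le_riemannIntegral {a : ℝ} {n : ℕ} (ha : 0 ≤ a) (hn : 1 ≤ n) :
    2 / √√n * exp (a * √n - a) ≤ riemannIntegral a n := by
  have h1 : 1 ≤ √√(n : ℝ) := by simp [one_le_sqrt, hn]
  have hsq : √√(n : ℝ) ^ 2 = √n := sq_sqrt (sqrt_nonneg _)
  -- the cap `δ = n^(-1/4)` balances its width against the loss `a √n δ² = a` in the exponent
  calc 2 / √√n * exp (a * √n - a) = 2 * (√√n)⁻¹ * exp (a * √n * (1 - (√√n)⁻¹ ^ 2)) := by
        rw [inv_pow, hsq]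
        field_simp
    _ ≤ riemannIntegral a n :=
        two_mul_mul_exp_le_integral (by positivity) (inv_pos.2 (by linarith))
          (inv_le_one_of_one_le₀ h1)

theorem abs_div_riemannIntegral_sub_one_le {m : ℤ} (k : ℤ) {a : ℝ} {n : ℕ} (hm : 0 < m)
    (ha : 0 ≤ a) (hn : 1 ≤ n) :
    |m / (2 * √n) * riemannSum m k a n / riemannIntegral a n - 1| ≤ m * exp a / 2 / √√n := by
  have hq : 1 ≤ √√(n : ℝ) := by simp [one_le_sqrt, hn]
  set q := √√(n : ℝ)
  have hsq : q ^ 2 = √n := sq_sqrt (sqrt_nonneg _)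
  have hlower := mul_exp_le_riemannIntegral ha hn
  have hJ : 0 < riemannIntegral a n := lt_of_lt_of_le (by positivity) hlower
  rw [div_sub_one hJ.ne', abs_div, abs_of_pos hJ]
  calc _ ≤ m / √n * exp (a * √n) / (2 / q * exp (a * √n - a)) :=
        div_le_div₀ (by positivity) (abs_mul_riemannSum_sub_riemannIntegral_le k hm ha hn)
          (by positivity) hlower
    _ = m * exp a / 2 / q := by
        rw [exp_sub, ← hsq]
        field_simp

/-- For integers `m ≥ 1`, `k` and a real `a > 0`, the Riemann sum `(m/(2√n)) S_n`
is asymptotic to the integral `J_n` as `n → ∞`. -/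
theorem riemannSum_asymptotic (m k : ℤ) (hm : 1 ≤ m) (a : ℝ) (ha : 0 < a) :
    Tendsto (fun n : ℕ =>
        (((m : ℝ) / (2 * Real.sqrt n)) * riemannSum m k a n) / riemannIntegral a n)
      atTop (nhds 1) := by
  have hbound : ∀ᶠ n : ℕ in atTop,
      ‖m / (2 * √n) * riemannSum m k a n / riemannIntegral a n - 1‖ ≤ m * exp a / 2 / √√n :=
    (eventually_ge_atTop 1).mono fun n hn =>
      abs_div_riemannIntegral_sub_one_le k (by omega) ha.le hn
  have hdecay : Tendsto (fun n : ℕ => m * exp a / 2 / √√n) atTop (nhds 0) :=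
    tendsto_const_nhds.div_atTop
      (tendsto_sqrt_atTop.comp (tendsto_sqrt_atTop.comp tendsto_natCast_atTop_atTop))
  exact tendsto_sub_nhds_zero_iff.1 (squeeze_zero_norm' hbound hdecay)
end

section
/- Let a > 0 be a real number. Then ∫_{−1}^{1} e^{λ a √(1 − t²)} dt is asymptotic to e^{aλ} · √(2π/(aλ)) as λ → ∞; that is, the ratio (∫_{−1}^{1} e^{λ a √(1−t²)} dt) · e^{−aλ} · √(aλ/(2π)) tends to 1 as λ → +∞. In particular, with a = 4π/3 and λ = √n, the integral J_n = ∫_{−1}^1 e^{(4π√n/3)√(1−t²)} dt is asymptotic to (√3/(√2 · n^{1/4})) e^{4π√n/3} as n → ∞. -/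
/-!
Laplace's method. The substitution `t = s / √c` turns `e^{-c} √c ∫_{-1}^{1} e^{c √(1 - t²)} dt`
into `∫ exp (c (√(1 - s²/c) - 1)) ds` over `|s| < √c`. Since `√(1 - x) ≤ 1 - x / 2`, this integrand
is dominated by the Gaussian `e^{-s²/2}`, and since `c (√(1 - s²/c) - 1) = -s² / (1 + √(1 - s²/c))`
it converges pointwise to it. By dominated convergence the normalized integral tends to
`∫ e^{-s²/2} ds = √(2π)`.
-/

open Filter Real Set MeasureTheory

lemma sqrt_one_sub_le_one_sub_half {x : ℝ} (hx : x ≤ 2) : √(1 - x) ≤ 1 - x / 2 :=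
  sqrt_le_iff.mpr ⟨by linarith, by nlinarith [sq_nonneg x]⟩

lemma sqrt_one_sub_sub_one {u : ℝ} (hu : u ≤ 1) : √(1 - u) - 1 = -u / (1 + √(1 - u)) := by
  rw [eq_div_iff (by positivity)]
  nlinarith [sq_sqrt (sub_nonneg.mpr hu)]

lemma mul_div_sqrt_sq {c : ℝ} (hc : 0 < c) (s : ℝ) : c * (s / √c) ^ 2 = s ^ 2 := by
  rw [div_pow, sq_sqrt hc.le]
  field_simp

noncomputable def rescaledIntegrand (c s : ℝ) : ℝ :=
  (Ioo (-1) 1).indicator (fun t => exp (c * (√(1 - t ^ 2) - 1))) (s / √c)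

lemma integral_rescaledIntegrand {c : ℝ} (hc : 0 < c) :
    ∫ s, rescaledIntegrand c s =
      (∫ t in Ioo (-1 : ℝ) 1, exp (c * √(1 - t ^ 2))) * exp (-c) * √c := by
  have hshift : ∫ t in Ioo (-1 : ℝ) 1, exp (c * (√(1 - t ^ 2) - 1)) =
      (∫ t in Ioo (-1 : ℝ) 1, exp (c * √(1 - t ^ 2))) * exp (-c) := by
    rw [← integral_mul_const]
    congr 1 with t
    rw [← exp_add]
    ring_nf
  unfold rescaledIntegrand
  rw [Measure.integral_comp_div (fun t => (Ioo (-1) 1).indicator _ t),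
    abs_of_pos (sqrt_pos.mpr hc), smul_eq_mul, integral_indicator measurableSet_Ioo, hshift,
    mul_comm]

lemma rescaledIntegrand_le_gaussian {c : ℝ} (hc : 0 < c) (s : ℝ) :
    rescaledIntegrand c s ≤ exp (-(1 / 2) * s ^ 2) := by
  unfold rescaledIntegrand
  by_cases hs : s / √c ∈ Ioo (-1) 1
  · rw [indicator_of_mem hs, exp_le_exp]
    have hsq : (s / √c) ^ 2 < 1 := by rw [sq_lt_one_iff_abs_lt_one, abs_lt]; exact hs
    calc c * (√(1 - (s / √c) ^ 2) - 1) ≤ c * (-((s / √c) ^ 2) / 2) := by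
          gcongr; linarith [sqrt_one_sub_le_one_sub_half (x := (s / √c) ^ 2) (by linarith)]
      _ = -(1 / 2) * s ^ 2 := by rw [← mul_div_sqrt_sq hc s]; ring
  · rw [indicator_of_notMem hs]
    positivity

lemma tendsto_rescaledIntegrand (s : ℝ) :
    Tendsto (fun c => rescaledIntegrand c s) atTop (nhds (exp (-(1 / 2) * s ^ 2))) := by
  have hu : Tendsto (fun c => s / √c) atTop (nhds 0) :=
    tendsto_const_nhds.div_atTop tendsto_sqrt_atTop
  have hcont : Continuous fun u : ℝ => exp (-s ^ 2 / (1 + √(1 - u ^ 2))) :=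
    (continuous_const.div (by fun_prop) fun u => by positivity).rexp
  have hlim : Tendsto (fun c => exp (-s ^ 2 / (1 + √(1 - (s / √c) ^ 2)))) atTop
      (nhds (exp (-(1 / 2) * s ^ 2))) := by
    convert (hcont.tendsto 0).comp hu using 2
    norm_num
    ring_nf
  refine hlim.congr' ?_
  filter_upwards [hu.eventually (Ioo_mem_nhds (by norm_num : (-1 : ℝ) < 0) one_pos),
    eventually_gt_atTop 0] with c hs hc
  have hu1 : (s / √c) ^ 2 ≤ 1 := by rw [sq_le_one_iff_abs_le_one, abs_le]; exact ⟨hs.1.le, hs.2.le⟩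
  rw [rescaledIntegrand, indicator_of_mem (show s / √c ∈ Ioo (-1) 1 from hs),
    sqrt_one_sub_sub_one hu1, ← mul_div_sqrt_sq hc s]
  ring_nf

lemma tendsto_integral_rescaledIntegrand :
    Tendsto (fun c => ∫ s, rescaledIntegrand c s) atTop (nhds √(2 * π)) := by
  have hgauss : ∫ s : ℝ, exp (-(1 / 2) * s ^ 2) = √(2 * π) := by
    rw [integral_gaussian, show π / (1 / 2) = 2 * π by ring]
  rw [← hgauss]
  refine tendsto_integral_filter_of_dominated_convergence _ (Eventually.of_forall fun c => ?_) ?_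
    (integrable_exp_neg_mul_sq (b := 1 / 2) (by norm_num))
    (Eventually.of_forall tendsto_rescaledIntegrand)
  · exact ((Measurable.indicator (by fun_prop) measurableSet_Ioo).comp
      (measurable_id.div_const _)).aestronglyMeasurable
  · filter_upwards [eventually_gt_atTop 0] with c hc
    exact Eventually.of_forall fun s =>
      (norm_of_nonneg (indicator_nonneg (fun _ _ => (exp_pos _).le) _)).trans_le
        (rescaledIntegrand_le_gaussian hc s)

theorem tendsto_integral_exp_mul_sqrt_one_sub_sq :
    Tendsto (fun c => (∫ t in Ioo (-1 : ℝ) 1, exp (c * √(1 - t ^ 2))) * exp (-c) * √(c / (2 * π)))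
      atTop (nhds 1) := by
  have h := tendsto_integral_rescaledIntegrand.div_const √(2 * π)
  rw [div_self (by positivity)] at h
  refine h.congr' ?_
  filter_upwards [eventually_gt_atTop 0] with c hc
  rw [integral_rescaledIntegrand hc, sqrt_div hc.le, mul_div_assoc]

lemma sqrt_four_pi_sqrt_div_three_div_two_pi {x : ℝ} (hx : 0 ≤ x) :
    √(4 * π * √x / 3 / (2 * π)) = (√3 / (√2 * x ^ ((1 : ℝ) / 4)))⁻¹ := by
  have hquarter : x ^ ((1 : ℝ) / 4) = √√x := by
    rw [sqrt_eq_rpow, sqrt_eq_rpow, ← rpow_mul hx]; norm_num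
  rw [show 4 * π * √x / 3 / (2 * π) = 2 * √x / 3 by field_simp; ring, inv_div, hquarter,
    sqrt_div (by positivity), sqrt_mul zero_le_two]

/-- For `a > 0`, `∫_{-1}^{1} e^{λ a √(1-t²)} dt ~ e^{aλ} √(2π/(aλ))` as `λ → ∞`;
in particular (taking `a = 4π/3`, `λ = √n`), the integral
`J_n = ∫_{-1}^{1} e^{(4π√n/3)√(1-t²)} dt` is asymptotic to
`(√3/(√2 n^{1/4})) e^{4π√n/3}` as `n → ∞`. -/
theorem integral_exp_sqrt_one_sub_sq_asymptotic (a : ℝ) (ha : 0 < a) :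
    Tendsto (fun lam : ℝ =>
        (∫ t in Set.Ioo (-1 : ℝ) 1, Real.exp (lam * a * Real.sqrt (1 - t ^ 2))) *
          Real.exp (-(a * lam)) * Real.sqrt (a * lam / (2 * Real.pi)))
      atTop (nhds 1) ∧
    Tendsto (fun n : ℕ =>
        (∫ t in Set.Ioo (-1 : ℝ) 1,
            Real.exp (4 * Real.pi * Real.sqrt n / 3 * Real.sqrt (1 - t ^ 2))) /
          (Real.sqrt 3 / (Real.sqrt 2 * (n : ℝ) ^ ((1 : ℝ) / 4)) *
            Real.exp (4 * Real.pi * Real.sqrt n / 3)))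
      atTop (nhds 1) := by
  constructor
  · refine (tendsto_integral_exp_mul_sqrt_one_sub_sq.comp
      (tendsto_id.const_mul_atTop ha)).congr fun lam => ?_
    simp only [Function.comp_apply, id, mul_comm a lam]
  · have hc : Tendsto (fun n : ℕ => 4 * π * √n / 3) atTop atTop :=
      ((tendsto_sqrt_atTop.comp tendsto_natCast_atTop_atTop).const_mul_atTop
        (by positivity)).atTop_div_const (by norm_num)
    refine (tendsto_integral_exp_mul_sqrt_one_sub_sq.comp hc).congr fun n => ?_
    simp only [Function.comp_apply, sqrt_four_pi_sqrt_div_three_div_two_pi n.cast_nonneg, exp_neg]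
    ring
end
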